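/- Weak bisimilarity for the WHILE language is a congruence with respect to its operators: if p₁ ≈ p₂ and q₁ ≈ q₂ then p₁ ; q₁ ≈ p₂ ; q₂, and if p₁ ≈ p₂ then (while e p₁) ≈ (while e p₂) for every expression e. -/

import Mathlib

/-- Programs of the WHILE language:
`p ::= skip | v := e | p ; q | while e p`,
over variables `V` and arithmetic expressions `E`. -/
inductive Prog (V E : Type) : Type
  | skip : Prog V E
  | assign : V → E → Prog V E
  | seq : Prog V E → Prog V E → Prog V E
  | whileP : E → Prog V E → Prog V E

/-- Single steps of WHILE configurations: a configuration `(s, p)` steps to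
either a terminal configuration `(s', none)` (i.e. `(s', ✓)`) or to `(s', some p')`.
`eval e s` is the evaluation `[e]_s` of expression `e` in store `s`. -/
inductive WStepRel {V E : Type} [DecidableEq V] (eval : E → (V → ℕ) → ℕ) :
    (V → ℕ) × Prog V E → (V → ℕ) × Option (Prog V E) → Prop
  | skip (s : V → ℕ) : WStepRel eval (s, .skip) (s, none)
  | assign (s : V → ℕ) (v : V) (e : E) :
      WStepRel eval (s, .assign v e) (Function.update s v (eval e s), none)
  | seq1 {s s' : V → ℕ} {p q : Prog V E} :
      WStepRel eval (s, p) (s', none) → WStepRel eval (s, .seq p q) (s', some q)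
  | seq2 {s s' : V → ℕ} {p p' q : Prog V E} :
      WStepRel eval (s, p) (s', some p') →
      WStepRel eval (s, .seq p q) (s', some (.seq p' q))
  | while0 {s : V → ℕ} {e : E} {p : Prog V E} :
      eval e s = 0 → WStepRel eval (s, .whileP e p) (s, none)
  | while1 {s : V → ℕ} {e : E} {p : Prog V E} :
      eval e s ≠ 0 → WStepRel eval (s, .whileP e p) (s, some (.seq p (.whileP e p)))

/-- `→*`: the reflexive–transitive closure of the step relation on configurations
(terminal configurations do not step). -/
def Multi {V E : Type} [DecidableEq V] (eval : E → (V → ℕ) → ℕ) :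
    (V → ℕ) × Option (Prog V E) → (V → ℕ) × Option (Prog V E) → Prop :=
  Relation.ReflTransGen (fun c d => ∃ p, c.2 = some p ∧ WStepRel eval (c.1, p) d)

/-- A relation `R` on WHILE programs is a weak bisimulation if whenever `R p q`,
for every store `s`: terminating multi-steps of `p` are matched by `q` with the
same final store, multi-steps `(s, p) →* (t, p')` are matched by
`(s, q) →* (t, q')` with `R p' q'`, and symmetrically. -/
def IsWB {V E : Type} [DecidableEq V] (eval : E → (V → ℕ) → ℕ)
    (R : Prog V E → Prog V E → Prop) : Prop :=
  ∀ p q, R p q → ∀ s : V → ℕ,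
    (∀ t, Multi eval (s, some p) (t, none) → Multi eval (s, some q) (t, none)) ∧
    (∀ t p', Multi eval (s, some p) (t, some p') →
      ∃ q', Multi eval (s, some q) (t, some q') ∧ R p' q') ∧
    (∀ t, Multi eval (s, some q) (t, none) → Multi eval (s, some p) (t, none)) ∧
    (∀ t q', Multi eval (s, some q) (t, some q') →
      ∃ p', Multi eval (s, some p) (t, some p') ∧ R p' q')

/-- Weak bisimilarity of WHILE programs. -/
def WBisim {V E : Type} [DecidableEq V] (eval : E → (V → ℕ) → ℕ)
    (p q : Prog V E) : Prop :=
  ∃ R, IsWB eval R ∧ R p q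

/-! The closure of `≈` under `;` and `while e` is a weak bisimulation. It suffices to match single
steps of the left program, since runs are chains of steps; and a step of a compound program is
either a step of a component (matched by `≈` or by induction) or the unfolding of `while e p` into
`p ; while e p`, which lands in the closure again. -/

section
variable {V E : Type}

inductive CongrClosure (R : Prog V E → Prog V E → Prop) : Prog V E → Prog V E → Prop
  | of {p q} : R p q → CongrClosure R p q
  | seq {p₁ p₂ q₁ q₂} : CongrClosure R p₁ p₂ → CongrClosure R q₁ q₂ →
      CongrClosure R (.seq p₁ q₁) (.seq p₂ q₂)
  | whileP {p₁ p₂} (e : E) : CongrClosure R p₁ p₂ →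
      CongrClosure R (.whileP e p₁) (.whileP e p₂)

instance CongrClosure.instSymm {R : Prog V E → Prog V E → Prop} [Std.Symm R] :
    Std.Symm (CongrClosure R) where
  symm p q h := by
    induction h with
    | of h => exact .of (symm h)
    | seq _ _ ihp ihq => exact .seq ihp ihq
    | whileP e _ ih => exact .whileP e ih

variable [DecidableEq V] (eval : E → (V → ℕ) → ℕ)

def StepSim (R : Prog V E → Prog V E → Prop) : Prop :=
  ∀ p q, R p q → ∀ s t o, WStepRel eval (s, p) (t, o) →
    ∃ o', Multi eval (s, some q) (t, o') ∧ Option.Rel R o o'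

variable {eval}

theorem Multi.single {s : V → ℕ} {p : Prog V E} {c : (V → ℕ) × Option (Prog V E)}
    (h : WStepRel eval (s, p) c) : Multi eval (s, some p) c :=
  Relation.ReflTransGen.single ⟨p, rfl, h⟩

/-- `c.2.elim q (.seq · q)` is the residual of `p ; q`: `q` once `p` has terminated. -/
theorem Multi.seq_left (q : Prog V E) {s : V → ℕ} {p : Prog V E}
    {c : (V → ℕ) × Option (Prog V E)} (h : Multi eval (s, some p) c) :
    Multi eval (s, some (.seq p q)) (c.1, some (c.2.elim q (.seq · q))) := by
  induction h with
  | refl => exact .refl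
  | @tail b c _ hstep ih =>
    obtain ⟨r, hb, hstep⟩ := hstep
    rw [hb] at ih
    obtain ⟨t, _ | r'⟩ := c
    · exact ih.tail ⟨_, rfl, .seq1 hstep⟩
    · exact ih.tail ⟨_, rfl, .seq2 hstep⟩

theorem StepSim.multi {R : Prog V E → Prog V E → Prop} (hR : StepSim eval R)
    {p q : Prog V E} (hpq : R p q) {s : V → ℕ} {c : (V → ℕ) × Option (Prog V E)}
    (h : Multi eval (s, some p) c) :
    ∃ o', Multi eval (s, some q) (c.1, o') ∧ Option.Rel R c.2 o' := by
  induction h with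
  | refl => exact ⟨some q, .refl, .some hpq⟩
  | @tail b c _ hstep ih =>
    obtain ⟨r, hb, hstep⟩ := hstep
    obtain ⟨_, hrun, ⟨hrr'⟩⟩ := hb ▸ ih
    obtain ⟨o', hrun', hrel⟩ := hR _ _ hrr' _ _ _ hstep
    exact ⟨o', hrun.trans hrun', hrel⟩

theorem isWB_of_stepSim {R : Prog V E → Prog V E → Prop} (hR : StepSim eval R)
    [Std.Symm R] : IsWB eval R := by
  have terminates {p q s t} (hpq : R p q) (h : Multi eval (s, some p) (t, none)) :
      Multi eval (s, some q) (t, none) := by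
    obtain ⟨_, hrun, ⟨⟩⟩ := hR.multi hpq h
    exact hrun
  have continues {p q s t p'} (hpq : R p q) (h : Multi eval (s, some p) (t, some p')) :
      ∃ q', Multi eval (s, some q) (t, some q') ∧ R p' q' := by
    obtain ⟨_, hrun, ⟨hrel⟩⟩ := hR.multi hpq h
    exact ⟨_, hrun, hrel⟩
  intro p q hpq s
  refine ⟨fun t => terminates hpq, fun t p' => continues hpq,
    fun t => terminates (symm hpq), fun t q' h => ?_⟩
  obtain ⟨p', hrun, hrel⟩ := continues (symm hpq) h
  exact ⟨p', hrun, symm hrel⟩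

theorem IsWB.stepSim {R : Prog V E → Prog V E → Prop} (hR : IsWB eval R) :
    StepSim eval R := by
  rintro p q hpq s t (_ | p') hstep
  · exact ⟨none, (hR p q hpq s).1 t (.single hstep), .none⟩
  · obtain ⟨q', hrun, hrel⟩ := (hR p q hpq s).2.1 t p' (.single hstep)
    exact ⟨some q', hrun, .some hrel⟩

theorem StepSim.congrClosure {R : Prog V E → Prog V E → Prop} (hR : StepSim eval R) :
    StepSim eval (CongrClosure R) := by
  intro p q hpq
  induction hpq with
  | of h =>
    intro s t o hstep
    obtain ⟨o', hrun, hrel⟩ := hR _ _ h s t o hstep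
    cases hrel with
    | none => exact ⟨none, hrun, .none⟩
    | some hrel => exact ⟨_, hrun, .some (.of hrel)⟩
  | seq _ hq ihp =>
    intro s t o hstep
    cases hstep with
    | seq1 hstep =>
      obtain ⟨_, hrun, ⟨⟩⟩ := ihp s t none hstep
      exact ⟨_, hrun.seq_left _, .some hq⟩
    | seq2 hstep =>
      obtain ⟨_, hrun, ⟨hrel⟩⟩ := ihp s t _ hstep
      exact ⟨_, hrun.seq_left _, .some (.seq hrel hq)⟩
  | whileP e hp =>
    intro s t o hstep
    cases hstep with
    | while0 h0 => exact ⟨none, .single (.while0 h0), .none⟩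
    | while1 h1 => exact ⟨_, .single (.while1 h1), .some (.seq hp (.whileP e hp))⟩

variable (eval)

instance WBisim.instSymm : Std.Symm (WBisim eval (V := V) (E := E)) where
  symm p q := by
    rintro ⟨R, hR, hpq⟩
    refine ⟨flip R, fun a b hab s => ?_, hpq⟩
    obtain ⟨h₁, h₂, h₃, h₄⟩ := hR b a hab s
    exact ⟨h₃, h₄, h₁, h₂⟩

theorem isWB_wbisim : IsWB eval (WBisim eval (V := V) (E := E)) := by
  rintro p q ⟨R, hR, hpq⟩ s
  obtain ⟨h₁, h₂, h₃, h₄⟩ := hR p q hpq s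
  exact ⟨h₁, fun t p' h => (h₂ t p' h).imp fun _ ⟨hrun, hrel⟩ => ⟨hrun, R, hR, hrel⟩,
    h₃, fun t q' h => (h₄ t q' h).imp fun _ ⟨hrun, hrel⟩ => ⟨hrun, R, hR, hrel⟩⟩

theorem isWB_congrClosure_wbisim : IsWB eval (CongrClosure (WBisim eval (V := V) (E := E))) :=
  isWB_of_stepSim (isWB_wbisim eval).stepSim.congrClosure

end

/-- Weak bisimilarity for WHILE is a congruence with respect to sequential
composition and while-loops. -/
theorem while_wbisim_congruence (V E : Type) [DecidableEq V]
    (eval : E → (V → ℕ) → ℕ) :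
    (∀ p₁ p₂ q₁ q₂ : Prog V E, WBisim eval p₁ p₂ → WBisim eval q₁ q₂ →
      WBisim eval (.seq p₁ q₁) (.seq p₂ q₂)) ∧
    (∀ (p₁ p₂ : Prog V E) (e : E), WBisim eval p₁ p₂ →
      WBisim eval (.whileP e p₁) (.whileP e p₂)) :=
  ⟨fun _ _ _ _ hp hq => ⟨_, isWB_congrClosure_wbisim eval, .seq (.of hp) (.of hq)⟩,
    fun _ _ e hp => ⟨_, isWB_congrClosure_wbisim eval, .whileP e (.of hp)⟩⟩
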